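/- An ideal I of R with I ∩ S = ∅ is an S-J-ideal if and only if there exists s ∈ S such that for every b ∈ R with b ∉ (J(R) : s), one has (I : b) ⊆ (I : s). -/

import Mathlib

open Ideal

/-- `S` is a multiplicatively closed subset of `R`: `1 ∈ S` and `S` is closed under
multiplication. -/
def MulClosed {R : Type*} [CommRing R] (S : Set R) : Prop :=
  (1 : R) ∈ S ∧ ∀ a ∈ S, ∀ b ∈ S, a * b ∈ S

/-- `I` is an `S`-`𝒥`-ideal associated with `s ∈ S`: for all `a b : R`, `a * b ∈ I`
implies `s * a ∈ 𝒥(R)` or `s * b ∈ I`, where `𝒥(R)` is the Jacobson radical of `R`. -/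
def SJIdealWith {R : Type*} [CommRing R] (S : Set R) (I : Ideal R) (s : R) : Prop :=
  s ∈ S ∧ ∀ a b : R, a * b ∈ I → s * a ∈ (⊥ : Ideal R).jacobson ∨ s * b ∈ I

/-- `I` is an `S`-`𝒥`-ideal: `I` is disjoint from `S` and some `s ∈ S` works. -/
def IsSJIdeal {R : Type*} [CommRing R] (S : Set R) (I : Ideal R) : Prop :=
  S ∩ (I : Set R) = ∅ ∧ ∃ s, SJIdealWith S I s

theorem Ideal.forall_mul_mem_imp_or_iff_colon_le {R : Type*} [CommRing R] (I J : Ideal R)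
    (s : R) :
    (∀ a b : R, a * b ∈ I → s * a ∈ J ∨ s * b ∈ I) ↔
      ∀ b : R, b ∉ J.colon (span {s}) → I.colon (span {b}) ≤ I.colon (span {s}) := by
  simp only [SetLike.le_def, mem_colon_span_singleton]
  constructor
  · intro h b hb x hx
    rw [mul_comm]
    exact (h b x (by rwa [mul_comm])).resolve_left (by rwa [mul_comm])
  · intro h a b hab
    refine or_iff_not_imp_left.mpr fun ha => ?_
    rw [mul_comm]
    exact h a (by rwa [mul_comm]) (by rwa [mul_comm])

theorem stmt5_general {R : Type*} [CommRing R] (S : Set R)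
    (I : Ideal R) (hdisj : S ∩ (I : Set R) = ∅) :
    IsSJIdeal S I ↔
      ∃ s ∈ S, ∀ b : R, b ∉ ((⊥ : Ideal R).jacobson).colon (Ideal.span {s}) →
        I.colon (Ideal.span {b}) ≤ I.colon (Ideal.span {s}) := by
  simp only [IsSJIdeal, SJIdealWith, hdisj, true_and, forall_mul_mem_imp_or_iff_colon_le]

theorem stmt5 {R : Type*} [CommRing R] (S : Set R) (hS : MulClosed S)
    (I : Ideal R) (hdisj : S ∩ (I : Set R) = ∅) :
    IsSJIdeal S I ↔
      ∃ s ∈ S, ∀ b : R, b ∉ ((⊥ : Ideal R).jacobson).colon (Ideal.span {s}) →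
        I.colon (Ideal.span {b}) ≤ I.colon (Ideal.span {s}) :=
  stmt5_general S I hdisj
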